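/- arXiv:1602.07985 — 3 statements merged into one kernel-verified Lean document; each statement's English description precedes it below -/
import Mathlib

section
/- For 0 < x < y < 1 and any two types σ, σ', under perfect grading the ratio (Pr[x ▷ σ]·Pr[y ▷ σ']) / (Pr[x ▷ σ']·Pr[y ▷ σ]) equals ((y(1−x))/(x(1−y)))^{B(σ)−B(σ')}. -/
/-!
For a type with entries in `[1, k]`, `Pr[z ▷ σ]` is a positive constant `c(σ)` times
`z ^ (k² − B(σ)) * (1 − z) ^ (B(σ) − k)`, the exponents being nonnegative because
`k ≤ Σᵢ σᵢ ≤ k²`. In the cross ratio the constants cancel, and the powers of `x`, `1 − x`,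
`y`, `1 − y` combine to `((y (1 − x)) / (x (1 − y))) ^ (B(σ) − B(σ'))`.
-/

/-- Probability, under perfect grading, that a paper with ground-truth rank
`x ∈ (0,1)` receives type `σ`:
`Pr[x ▷ σ] = N(σ) (∏ᵢ C(k−1, σᵢ−1)) x^{k²−B(σ)}(1−x)^{B(σ)−k}`. -/
noncomputable def perfectProb (k : ℕ) (σ : Fin k → ℕ) (x : ℝ) : ℝ :=
  (k.factorial : ℝ) /
      (∏ i ∈ Finset.Icc 1 k, ((Finset.univ.filter fun m => σ m = i).card.factorial : ℝ)) *
    (∏ i, ((k - 1).choose (σ i - 1) : ℝ)) *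
    x ^ (k ^ 2 - (k ^ 2 + k - ∑ i, σ i)) * (1 - x) ^ ((k ^ 2 + k - ∑ i, σ i) - k)

/-- The Borda score `B(σ) = k² + k − Σᵢ σᵢ` of a type `σ`. -/
def bordaScore (k : ℕ) (σ : Fin k → ℕ) : ℤ :=
  (k : ℤ) ^ 2 + k - ∑ i, (σ i : ℤ)

noncomputable def perfectCoeff (k : ℕ) (σ : Fin k → ℕ) : ℝ :=
  (k.factorial : ℝ) /
      (∏ i ∈ Finset.Icc 1 k, ((Finset.univ.filter fun m => σ m = i).card.factorial : ℝ)) *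
    (∏ i, ((k - 1).choose (σ i - 1) : ℝ))

theorem perfectCoeff_pos {k : ℕ} {σ : Fin k → ℕ} (hσ : ∀ i, σ i ≤ k) : 0 < perfectCoeff k σ := by
  have hchoose : ∀ i, (0 : ℝ) < (k - 1).choose (σ i - 1) := fun i =>
    Nat.cast_pos.2 (Nat.choose_pos (by have := hσ i; omega))
  unfold perfectCoeff
  exact mul_pos (by positivity) (Finset.prod_pos fun i _ => hchoose i)

theorem sum_mem_Icc_of_mem_Icc {k : ℕ} {σ : Fin k → ℕ} (hσ : ∀ i, σ i ∈ Finset.Icc 1 k) :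
    k ≤ ∑ i, σ i ∧ ∑ i, σ i ≤ k ^ 2 := by
  constructor
  · simpa using Finset.sum_le_sum fun i (_ : i ∈ Finset.univ) => (Finset.mem_Icc.1 (hσ i)).1
  · simpa [sq] using Finset.sum_le_sum fun i (_ : i ∈ Finset.univ) => (Finset.mem_Icc.1 (hσ i)).2

theorem perfectProb_eq_perfectCoeff_mul {k : ℕ} {σ : Fin k → ℕ} (hσ : ∀ i, σ i ∈ Finset.Icc 1 k)
    (z : ℝ) :
    perfectProb k σ z = perfectCoeff k σ * z ^ ((k : ℤ) ^ 2 - bordaScore k σ) *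
      (1 - z) ^ (bordaScore k σ - k) := by
  obtain ⟨hlo, hhi⟩ := sum_mem_Icc_of_mem_Icc hσ
  set s := ∑ i, σ i
  have hB : bordaScore k σ = (k : ℤ) ^ 2 + k - (s : ℕ) := by simp [bordaScore, s]
  rw [perfectProb, show k ^ 2 - (k ^ 2 + k - s) = s - k by omega,
    show k ^ 2 + k - s - k = k ^ 2 - s by omega, hB,
    show (k : ℤ) ^ 2 - (k ^ 2 + k - s) = ((s - k : ℕ) : ℤ) by push_cast [Nat.cast_sub hlo]; ring,
    show (k : ℤ) ^ 2 + k - s - k = ((k ^ 2 - s : ℕ) : ℤ) by push_cast [Nat.cast_sub hhi]; ring,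
    zpow_natCast, zpow_natCast, perfectCoeff]

theorem cross_ratio_zpow {K : Type*} [Field K] {c c' x y : K} (hc : c ≠ 0) (hc' : c' ≠ 0)
    (hx : x ≠ 0) (hy : y ≠ 0) (hx' : 1 - x ≠ 0) (hy' : 1 - y ≠ 0) (N M B B' : ℤ) :
    c * x ^ (N - B) * (1 - x) ^ (B - M) * (c' * y ^ (N - B') * (1 - y) ^ (B' - M)) /
        (c' * x ^ (N - B') * (1 - x) ^ (B' - M) * (c * y ^ (N - B) * (1 - y) ^ (B - M))) =
      (y * (1 - x) / (x * (1 - y))) ^ (B - B') := by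
  simp only [zpow_sub₀, hx, hy, hx', hy', ne_eq, not_false_eq_true, div_zpow, mul_zpow]
  field_simp

theorem stmt_5_general (k : ℕ) (σ σ' : Fin k → ℕ)
    (hσ : ∀ i, σ i ∈ Finset.Icc 1 k) (hσ' : ∀ i, σ' i ∈ Finset.Icc 1 k)
    (x y : ℝ) (hx : 0 < x) (hxy : x < y) (hy : y < 1) :
    perfectProb k σ x * perfectProb k σ' y / (perfectProb k σ' x * perfectProb k σ y) =
      (y * (1 - x) / (x * (1 - y))) ^ (bordaScore k σ - bordaScore k σ') := by
  have hle : ∀ {τ : Fin k → ℕ}, (∀ i, τ i ∈ Finset.Icc 1 k) → ∀ i, τ i ≤ k :=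
    fun hτ i => (Finset.mem_Icc.1 (hτ i)).2
  simp only [perfectProb_eq_perfectCoeff_mul hσ, perfectProb_eq_perfectCoeff_mul hσ']
  exact cross_ratio_zpow (perfectCoeff_pos (hle hσ)).ne' (perfectCoeff_pos (hle hσ')).ne' hx.ne'
    (hx.trans hxy).ne' (by linarith) (by linarith) _ _ _ _

/-- For `0 < x < y < 1` and any two types `σ, σ'`, under perfect grading
`(Pr[x ▷ σ]·Pr[y ▷ σ']) / (Pr[x ▷ σ']·Pr[y ▷ σ]) = ((y(1−x))/(x(1−y)))^{B(σ)−B(σ')}`. -/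
theorem stmt_5 (k : ℕ) (σ σ' : Fin k → ℕ)
    (hmono : Monotone σ) (hmono' : Monotone σ')
    (hσ : ∀ i, σ i ∈ Finset.Icc 1 k) (hσ' : ∀ i, σ' i ∈ Finset.Icc 1 k)
    (x y : ℝ) (hx : 0 < x) (hxy : x < y) (hy : y < 1)
    (hden : perfectProb k σ' x * perfectProb k σ y ≠ 0) :
    perfectProb k σ x * perfectProb k σ' y / (perfectProb k σ' x * perfectProb k σ y) =
      (y * (1 - x) / (x * (1 - y))) ^ (bordaScore k σ - bordaScore k σ') :=
  stmt_5_general k σ σ' hσ hσ' x y hx hxy hy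
end

section
/- Under perfect grading, for any two types σ, σ' with B(σ) > B(σ') and any measurable nonnegative function f: [0,1]² → [0,1] that is strictly positive on a set of positive measure within {(x,y) : 0 < x < y < 1}, the weight difference W(σ,σ') − W(σ',σ) = ∫₀¹∫ₓ¹ f(x,y)(Pr[x ▷ σ]Pr[y ▷ σ'] − Pr[x ▷ σ']Pr[y ▷ σ]) dy dx is strictly positive. -/
open MeasureTheory intervalIntegral

/-! Writing `s = ∑ σᵢ`, the density `perfectProb k σ x` is a positive multiple of
`x ^ (s - k) * (1 - x) ^ (k² - s)`. A larger Borda score means a smaller `s`, and this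
family has a monotone likelihood ratio: for `x < y` and `s < s'` the cross difference
`P_σ(x) P_σ'(y) - P_σ'(x) P_σ(y)` is a positive multiple of
`(y (1 - x)) ^ (s' - s) - (x (1 - y)) ^ (s' - s) > 0`. The integrand is therefore
nonnegative on the triangle `0 < x < y < 1` and positive wherever `f` is, and the iterated
integral is the integral over that triangle. -/

def triangle (a b : ℝ) : Set (ℝ × ℝ) := {p | a < p.1 ∧ p.1 < p.2 ∧ p.2 < b}

theorem measurableSet_triangle (a b : ℝ) : MeasurableSet (triangle a b) :=
  (measurableSet_lt measurable_const measurable_fst).inter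
    ((measurableSet_lt measurable_fst measurable_snd).inter
      (measurableSet_lt measurable_snd measurable_const))

theorem triangle_subset_Icc_prod_Icc (a b : ℝ) :
    triangle a b ⊆ Set.Icc a b ×ˢ Set.Icc a b := by
  rintro ⟨x, y⟩ ⟨hax, hxy, hyb⟩
  exact ⟨⟨hax.le, (hxy.trans hyb).le⟩, ⟨(hax.trans hxy).le, hyb.le⟩⟩

theorem intervalIntegral_intervalIntegral_eq_setIntegral_triangle {a b : ℝ} (hab : a ≤ b)
    {g : ℝ → ℝ → ℝ} (hg : IntegrableOn (fun p : ℝ × ℝ => g p.1 p.2) (triangle a b)) :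
    ∫ x in a..b, ∫ y in x..b, g x y = ∫ p in triangle a b, g p.1 p.2 := by
  set G := (triangle a b).indicator fun p : ℝ × ℝ => g p.1 p.2 with hG_def
  have hsection : ∀ x ∈ Set.Ioo a b, ∫ y in x..b, g x y = ∫ y, G (x, y) := by
    intro x hx
    have : (fun y => G (x, y)) = (Set.Ioo x b).indicator (g x) := by
      ext y
      by_cases hy : y ∈ Set.Ioo x b
      · rw [Set.indicator_of_mem hy, hG_def,
          Set.indicator_of_mem (show (x, y) ∈ triangle a b from ⟨hx.1, hy.1, hy.2⟩)]
      · rw [Set.indicator_of_notMem hy, hG_def, Set.indicator_of_notMem]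
        exact fun h => hy ⟨h.2.1, h.2.2⟩
    rw [this, MeasureTheory.integral_indicator measurableSet_Ioo, integral_of_le hx.2.le,
      integral_Ioc_eq_integral_Ioo]
  have hsection_zero : ∀ x ∉ Set.Ioo a b, ∫ y, G (x, y) = 0 := by
    intro x hx
    have : (fun y => G (x, y)) = fun _ => 0 := funext fun y =>
      Set.indicator_of_notMem (fun h => hx ⟨h.1, h.2.1.trans h.2.2⟩) _
    rw [this, MeasureTheory.integral_zero]
  have hG : Integrable (Function.uncurry fun x y => G (x, y)) (volume.prod volume) :=
    (integrable_indicator_iff (measurableSet_triangle a b)).2 hg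
  rw [integral_of_le hab, integral_Ioc_eq_integral_Ioo, setIntegral_congr_fun measurableSet_Ioo
    hsection, setIntegral_eq_integral_of_forall_compl_eq_zero hsection_zero,
    integral_integral hG, ← Measure.volume_eq_prod]
  exact MeasureTheory.integral_indicator (measurableSet_triangle a b)

theorem pow_mul_one_sub_pow_cross_lt {x y : ℝ} (hx : 0 < x) (hxy : x < y) (hy : y < 1)
    (a b : ℕ) {d : ℕ} (hd : d ≠ 0) :
    x ^ (a + d) * (1 - x) ^ b * (y ^ a * (1 - y) ^ (b + d)) <
      x ^ a * (1 - x) ^ (b + d) * (y ^ (a + d) * (1 - y) ^ b) := by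
  have hcommon : 0 < x ^ a * (1 - x) ^ b * y ^ a * (1 - y) ^ b := by
    have : 0 < 1 - x := by linarith
    have : 0 < 1 - y := by linarith
    have : 0 < y := hx.trans hxy
    positivity
  have hratio : (x * (1 - y)) ^ d < (y * (1 - x)) ^ d :=
    pow_lt_pow_left₀ (by nlinarith) (mul_nonneg hx.le (by linarith)) hd
  calc x ^ (a + d) * (1 - x) ^ b * (y ^ a * (1 - y) ^ (b + d))
      = x ^ a * (1 - x) ^ b * y ^ a * (1 - y) ^ b * (x * (1 - y)) ^ d := by
        rw [pow_add, pow_add, mul_pow]; ring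
    _ < x ^ a * (1 - x) ^ b * y ^ a * (1 - y) ^ b * (y * (1 - x)) ^ d :=
        mul_lt_mul_of_pos_left hratio hcommon
    _ = x ^ a * (1 - x) ^ (b + d) * (y ^ (a + d) * (1 - y) ^ b) := by
        rw [pow_add, pow_add, mul_pow]; ring

theorem le_sum_of_one_le {k : ℕ} {τ : Fin k → ℕ} (hτ : ∀ i, 1 ≤ τ i) : k ≤ ∑ i, τ i := by
  simpa using Finset.card_nsmul_le_sum Finset.univ τ 1 fun i _ => hτ i

theorem sum_le_sq_of_le {k : ℕ} {τ : Fin k → ℕ} (hτ : ∀ i, τ i ≤ k) : ∑ i, τ i ≤ k ^ 2 := by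
  simpa [sq] using Finset.sum_le_card_nsmul Finset.univ τ k fun i _ => hτ i

theorem bordaScore_lt_bordaScore_iff {k : ℕ} {σ σ' : Fin k → ℕ} :
    bordaScore k σ' < bordaScore k σ ↔ ∑ i, σ i < ∑ i, σ' i := by
  simp only [bordaScore, ← Nat.cast_sum]
  omega

@[fun_prop]
theorem continuous_perfectProb (k : ℕ) (τ : Fin k → ℕ) : Continuous (perfectProb k τ) := by
  unfold perfectProb
  fun_prop

theorem exists_pos_perfectProb_eq {k : ℕ} {τ : Fin k → ℕ} (hτ : ∀ i, τ i ≤ k) :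
    ∃ C : ℝ, 0 < C ∧
      ∀ x, perfectProb k τ x = C * x ^ (∑ i, τ i - k) * (1 - x) ^ (k ^ 2 - ∑ i, τ i) := by
  have hsum := sum_le_sq_of_le hτ
  refine ⟨(k.factorial : ℝ) /
      (∏ i ∈ Finset.Icc 1 k, ((Finset.univ.filter fun m => τ m = i).card.factorial : ℝ)) *
    (∏ i, ((k - 1).choose (τ i - 1) : ℝ)), ?_, fun x => ?_⟩
  · refine mul_pos (div_pos (by positivity) (Finset.prod_pos fun i _ => by positivity))
      (Finset.prod_pos fun i _ => Nat.cast_pos.2 (Nat.choose_pos ?_))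
    have := hτ i
    omega
  · rw [perfectProb, show k ^ 2 - (k ^ 2 + k - ∑ i, τ i) = ∑ i, τ i - k by omega,
      show k ^ 2 + k - ∑ i, τ i - k = k ^ 2 - ∑ i, τ i by omega]

theorem perfectProb_cross_pos {k : ℕ} {σ σ' : Fin k → ℕ}
    (hσ : ∀ i, σ i ∈ Finset.Icc 1 k) (hσ' : ∀ i, σ' i ∈ Finset.Icc 1 k)
    (hlt : ∑ i, σ i < ∑ i, σ' i) {x y : ℝ} (hx : 0 < x) (hxy : x < y) (hy : y < 1) :
    0 < perfectProb k σ x * perfectProb k σ' y - perfectProb k σ' x * perfectProb k σ y := by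
  obtain ⟨C, hC, hP⟩ := exists_pos_perfectProb_eq fun i => (Finset.mem_Icc.1 (hσ i)).2
  obtain ⟨C', hC', hP'⟩ := exists_pos_perfectProb_eq fun i => (Finset.mem_Icc.1 (hσ' i)).2
  have hk : k ≤ ∑ i, σ i := le_sum_of_one_le fun i => (Finset.mem_Icc.1 (hσ i)).1
  have hk' : ∑ i, σ' i ≤ k ^ 2 := sum_le_sq_of_le fun i => (Finset.mem_Icc.1 (hσ' i)).2
  rw [hP, hP, hP', hP',
    show ∑ i, σ' i - k = (∑ i, σ i - k) + (∑ i, σ' i - ∑ i, σ i) by omega,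
    show k ^ 2 - ∑ i, σ i = (k ^ 2 - ∑ i, σ' i) + (∑ i, σ' i - ∑ i, σ i) by omega]
  have hcross := pow_mul_one_sub_pow_cross_lt hx hxy hy (∑ i, σ i - k) (k ^ 2 - ∑ i, σ' i)
    (d := ∑ i, σ' i - ∑ i, σ i) (by omega)
  linear_combination mul_lt_mul_of_pos_left hcross (mul_pos hC hC')

theorem stmt_8_general (k : ℕ) (σ σ' : Fin k → ℕ)
    (hσ : ∀ i, σ i ∈ Finset.Icc 1 k) (hσ' : ∀ i, σ' i ∈ Finset.Icc 1 k)
    (hB : bordaScore k σ' < bordaScore k σ)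
    (f : ℝ → ℝ → ℝ)
    (hfmeas : Measurable fun p : ℝ × ℝ => f p.1 p.2)
    (hf01 : ∀ x y, 0 ≤ f x y ∧ f x y ≤ 1)
    (hfpos : 0 < volume {p : ℝ × ℝ | 0 < p.1 ∧ p.1 < p.2 ∧ p.2 < 1 ∧ 0 < f p.1 p.2}) :
    0 < ∫ x in (0 : ℝ)..1, ∫ y in x..1,
        f x y * (perfectProb k σ x * perfectProb k σ' y -
          perfectProb k σ' x * perfectProb k σ y) := by
  set D : ℝ × ℝ → ℝ := fun p =>
    perfectProb k σ p.1 * perfectProb k σ' p.2 - perfectProb k σ' p.1 * perfectProb k σ p.2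
  have hD_pos : ∀ p ∈ triangle 0 1, 0 < D p := fun p ⟨h0, hxy, h1⟩ =>
    perfectProb_cross_pos hσ hσ' (bordaScore_lt_bordaScore_iff.1 hB) h0 hxy h1
  have hD_int : IntegrableOn D (triangle 0 1) := by
    refine (ContinuousOn.integrableOn_compact (isCompact_Icc.prod isCompact_Icc) ?_).mono_set
      (triangle_subset_Icc_prod_Icc 0 1)
    exact (by unfold D; fun_prop : Continuous D).continuousOn
  have hint : IntegrableOn (fun p => f p.1 p.2 * D p) (triangle 0 1) :=
    hD_int.bdd_mul hfmeas.aestronglyMeasurable (c := 1) <| ae_of_all _ fun p => by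
      rw [Real.norm_of_nonneg (hf01 _ _).1]; exact (hf01 _ _).2
  rw [intervalIntegral_intervalIntegral_eq_setIntegral_triangle zero_le_one hint,
    setIntegral_pos_iff_support_of_nonneg_ae ((ae_restrict_iff' (measurableSet_triangle 0 1)).2
      (ae_of_all _ fun p hp => mul_nonneg (hf01 _ _).1 (hD_pos p hp).le)) hint]
  refine hfpos.trans_le (measure_mono ?_)
  rintro p ⟨h0, hxy, h1, hf⟩
  exact ⟨(mul_pos hf (hD_pos p ⟨h0, hxy, h1⟩)).ne', h0, hxy, h1⟩

/-- Under perfect grading, for types `σ, σ'` with `B(σ) > B(σ')` and any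
measurable `f : [0,1]² → [0,1]` strictly positive on a set of positive measure
within the open triangle `{(x,y) : 0 < x < y < 1}`, the weight difference
`W(σ,σ') − W(σ',σ) = ∫₀¹∫ₓ¹ f(x,y)(Pr[x ▷ σ]Pr[y ▷ σ'] − Pr[x ▷ σ']Pr[y ▷ σ]) dy dx`
is strictly positive. -/
theorem stmt_8 (k : ℕ) (σ σ' : Fin k → ℕ)
    (hmono : Monotone σ) (hmono' : Monotone σ')
    (hσ : ∀ i, σ i ∈ Finset.Icc 1 k) (hσ' : ∀ i, σ' i ∈ Finset.Icc 1 k)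
    (hB : bordaScore k σ' < bordaScore k σ)
    (f : ℝ → ℝ → ℝ)
    (hfmeas : Measurable fun p : ℝ × ℝ => f p.1 p.2)
    (hf01 : ∀ x y, 0 ≤ f x y ∧ f x y ≤ 1)
    (hfpos : 0 < volume {p : ℝ × ℝ | 0 < p.1 ∧ p.1 < p.2 ∧ p.2 < 1 ∧ 0 < f p.1 p.2}) :
    0 < ∫ x in (0 : ℝ)..1, ∫ y in x..1,
        f x y * (perfectProb k σ x * perfectProb k σ' y -
          perfectProb k σ' x * perfectProb k σ y) :=
  stmt_8_general k σ σ' hσ hσ' hB f hfmeas hf01 hfpos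
end

section
/- Let the weights be W(σ,σ') for a complete directed graph over the finite set of types, and define C(≻) = Σ_{σ≻σ'} W(σ,σ') + (1/2) Σ_σ W(σ,σ) for each strict total order ≻ on the types. If there is a function B on types such that for all σ ≠ σ', sign(W(σ,σ') − W(σ',σ)) = sign(B(σ) − B(σ')), then every strict total order ≻ that refines the non-increasing order of B (i.e., B(σ) > B(σ') implies σ ≻ σ') maximizes C(≻) over all strict total orders. -/
/-!
On every ordered pair `(σ, σ')` with `σ ≻ σ'` a strict total order collects at most
`max (W σ σ') (W σ' σ)`, and summing this symmetric quantity over the pairs of any strict total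
order gives half its sum over all off-diagonal pairs, independently of the order. An order
refining `B` attains the maximum on each of its pairs, because the sign condition makes
`W σ σ' ≥ W σ' σ` whenever `B σ ≥ B σ'`.
-/

open Finset

lemma Real.le_of_sign_sub_eq_sign_sub {x y a b : ℝ} (hs : Real.sign (x - y) = Real.sign (a - b))
    (hba : b ≤ a) : y ≤ x := by
  by_contra! hxy
  rw [Real.sign_of_neg (sub_neg.2 hxy)] at hs
  rcases hba.eq_or_lt with rfl | hlt
  · simp at hs
  · rw [Real.sign_of_pos (sub_pos.2 hlt)] at hs
    norm_num at hs

section StrictTotalOrder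

variable {α M : Type*} [Fintype α] [AddCommMonoid M]

lemma sum_filter_add_sum_filter_swap [DecidableEq α] (r : α → α → Prop) [DecidableRel r]
    [IsStrictTotalOrder α r] (g : α × α → M) :
    ∑ p ∈ univ.filter (fun p : α × α => r p.1 p.2), g p +
        ∑ p ∈ univ.filter (fun p : α × α => r p.1 p.2), g p.swap =
      ∑ p ∈ univ.filter (fun p : α × α => p.1 ≠ p.2), g p := by
  have hswap : ∑ p ∈ univ.filter (fun p : α × α => r p.1 p.2), g p.swap =
      ∑ p ∈ univ.filter (fun p : α × α => r p.2 p.1), g p := by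
    simp only [sum_filter]
    exact (Equiv.prodComm α α).sum_comp fun p => if r p.2 p.1 then g p else 0
  rw [hswap, sum_filter, sum_filter, sum_filter, ← sum_add_distrib]
  refine sum_congr rfl fun p _ => ?_
  rcases trichotomous_of r p.1 p.2 with h | h | h
  · simp [h, asymm h, ne_of_irrefl h]
  · simp [h, irrefl]
  · simp [h, asymm h, ne_of_irrefl' h]

lemma sum_filter_eq_of_symmetric [IsAddTorsionFree M]
    (r r' : α → α → Prop) [DecidableRel r] [DecidableRel r']
    [IsStrictTotalOrder α r] [IsStrictTotalOrder α r'] (g : α × α → M)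
    (hg : ∀ p, g p.swap = g p) :
    ∑ p ∈ univ.filter (fun p : α × α => r p.1 p.2), g p =
      ∑ p ∈ univ.filter (fun p : α × α => r' p.1 p.2), g p := by
  classical
  have h := sum_filter_add_sum_filter_swap r g
  have h' := sum_filter_add_sum_filter_swap r' g
  simp only [hg] at h h'
  rw [← two_nsmul, ← h', ← two_nsmul] at h
  exact (nsmul_right_injective two_ne_zero) h

end StrictTotalOrder

/-- Abstract optimality of Borda orderings: if the pairwise weight comparisons
agree in sign with the comparisons of a score function `B`, then any strict
total order refining the non-increasing order of `B` maximizes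
`C(≻) = Σ_{σ≻σ'} W(σ,σ') + (1/2)Σ_σ W(σ,σ)` over all strict total orders. -/
theorem stmt_9 {Types : Type*} [Fintype Types]
    (W : Types → Types → ℝ) (B : Types → ℝ)
    (hsign : ∀ σ σ', σ ≠ σ' → Real.sign (W σ σ' - W σ' σ) = Real.sign (B σ - B σ'))
    (r : Types → Types → Prop) [DecidableRel r] (hr : IsStrictTotalOrder Types r)
    (hrefine : ∀ σ σ', B σ' < B σ → r σ σ') :
    ∀ (r' : Types → Types → Prop) [DecidableRel r'], IsStrictTotalOrder Types r' →
      (∑ p ∈ Finset.univ.filter fun p : Types × Types => r' p.1 p.2, W p.1 p.2) +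
          (1 / 2) * ∑ σ, W σ σ ≤
        (∑ p ∈ Finset.univ.filter fun p : Types × Types => r p.1 p.2, W p.1 p.2) +
          (1 / 2) * ∑ σ, W σ σ := by
  intro r' _ hr'
  have := hr
  have hdom : ∀ σ σ', r σ σ' → W σ' σ ≤ W σ σ' := fun σ σ' h =>
    Real.le_of_sign_sub_eq_sign_sub (hsign σ σ' (ne_of_irrefl h))
      (not_lt.1 fun hlt => asymm h (hrefine σ' σ hlt))
  let M : Types × Types → ℝ := fun p => max (W p.1 p.2) (W p.2 p.1)
  gcongr ?_ + _
  calc ∑ p ∈ univ.filter (fun p : Types × Types => r' p.1 p.2), W p.1 p.2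
      ≤ ∑ p ∈ univ.filter (fun p : Types × Types => r' p.1 p.2), M p :=
        sum_le_sum fun p _ => le_max_left _ _
    _ = ∑ p ∈ univ.filter (fun p : Types × Types => r p.1 p.2), M p :=
        sum_filter_eq_of_symmetric r' r M fun p => max_comm _ _
    _ = ∑ p ∈ univ.filter (fun p : Types × Types => r p.1 p.2), W p.1 p.2 :=
        sum_congr rfl fun p hp => max_eq_left (hdom p.1 p.2 (mem_filter.1 hp).2)
end
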